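/- For every odd integer k ≥ 3, the 4×4 complex matrix V_k is unitary, i.e., V_k·V_k† = V_k†·V_k = I. -/

import Mathlib

open Matrix

/-- The 4×4 complex matrix `V_k` from the paper, with `R_k = cos(π/k)`, `I_k = sin(π/k)`,
`R_{2k} = cos(π/(2k))`:
`(1/√(R_k+1)) · [[1/√2, 0, √R_k, e^{iπ/k}/√2], [1/√2, 0, −√R_k·e^{−iπ/k}, e^{−iπ/k}/√2],`
`[√R_k, 0, e^{−iπ/(2k)}·I_k/(i·√2·R_{2k}), −√R_k], [0, √(R_k+1), 0, 0]]`,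
rows and columns indexed by two-bit strings `00,01,10,11` (encoded as `0,1,2,3`). -/
noncomputable def VMat (k : ℕ) : Matrix (Fin 4) (Fin 4) ℂ :=
  (1 / (Real.sqrt (Real.cos (Real.pi / k) + 1) : ℂ)) •
    !![1 / (Real.sqrt 2 : ℂ), 0, (Real.sqrt (Real.cos (Real.pi / k)) : ℂ),
          Complex.exp (Complex.I * ((Real.pi : ℂ) / (k : ℂ))) / (Real.sqrt 2 : ℂ);
        1 / (Real.sqrt 2 : ℂ), 0,
          -((Real.sqrt (Real.cos (Real.pi / k)) : ℂ) *
              Complex.exp (-(Complex.I * ((Real.pi : ℂ) / (k : ℂ))))),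
          Complex.exp (-(Complex.I * ((Real.pi : ℂ) / (k : ℂ)))) / (Real.sqrt 2 : ℂ);
        (Real.sqrt (Real.cos (Real.pi / k)) : ℂ), 0,
          Complex.exp (-(Complex.I * ((Real.pi : ℂ) / (2 * (k : ℂ))))) *
              (Real.sin (Real.pi / k) : ℂ) /
            (Complex.I * (Real.sqrt 2 : ℂ) * (Real.cos (Real.pi / (2 * k)) : ℂ)),
          -(Real.sqrt (Real.cos (Real.pi / k)) : ℂ);
        0, (Real.sqrt (Real.cos (Real.pi / k) + 1) : ℂ), 0, 0]

/-!
Put `t = π / k`. Since `sin t = 2 sin (t/2) cos (t/2)`, the entry at `(10, 10)` equals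
`(e^{-it} - 1) / √2`, so `V_k` is `1 / √(cos t + 1)` times a matrix whose entries are polynomial in
`1 / √2`, `r = √(cos t)`, `e = e^{it}` and `ē`. Orthonormality of its columns is then a polynomial
identity modulo `e ē = 1` and `e + ē = 2 r²`, i.e. `|e| = 1` and `Re e = cos t`.
-/

open ComplexConjugate

theorem Real.cos_pi_div_pos {x : ℝ} (hx : 2 < x) : 0 < Real.cos (Real.pi / x) := by
  have hpi := Real.pi_pos
  refine Real.cos_pos_of_mem_Ioo ⟨by linarith [div_pos hpi (by linarith : (0 : ℝ) < x)], ?_⟩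
  exact (div_lt_div_iff_of_pos_left hpi (by linarith) two_pos).mpr hx

open Complex in
theorem Complex.exp_neg_I_half_mul_sin_div_cos_half (z : ℂ) (hz : cos (z / 2) ≠ 0) :
    exp (-(I * (z / 2))) * sin z / (I * cos (z / 2)) = exp (-(I * z)) - 1 := by
  obtain ⟨w, rfl⟩ : ∃ w, z = 2 * w := ⟨z / 2, by ring⟩
  rw [mul_div_cancel_left₀ w two_ne_zero] at hz ⊢
  have hsq : exp (-(I * (2 * w))) = exp (-(I * w)) ^ 2 := by
    rw [← exp_nat_mul]; ring_nf
  have hinv : exp (-(I * w)) * exp (I * w) = 1 := by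
    rw [← exp_add]; simp
  rw [sin_two_mul, hsq, sin, neg_mul, mul_comm w I]
  field_simp
  linear_combination -hinv

noncomputable def vMatTemplate (a r q : ℝ) (e : ℂ) : Matrix (Fin 4) (Fin 4) ℂ :=
  (1 / (q : ℂ)) •
    !![1 / (a : ℂ), 0, (r : ℂ), e / a;
       1 / (a : ℂ), 0, -((r : ℂ) * conj e), conj e / a;
       (r : ℂ), 0, (conj e - 1) / a, -(r : ℂ);
       0, (q : ℂ), 0, 0]

theorem vMatTemplate_mem_unitaryGroup {a r q : ℝ} {e : ℂ} (ha : a ^ 2 = 2)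
    (hq : q ^ 2 = r ^ 2 + 1) (he : ‖e‖ = 1) (hre : e.re = r ^ 2) :
    vMatTemplate a r q e ∈ unitaryGroup (Fin 4) ℂ := by
  have ha0 : (a : ℂ) ≠ 0 := by norm_cast; rintro rfl; norm_num at ha
  have hq0 : (q : ℂ) ≠ 0 := by norm_cast; rintro rfl; nlinarith [sq_nonneg r]
  have ha' : (a : ℂ) ^ 2 = 2 := by exact_mod_cast ha
  have hq' : (q : ℂ) ^ 2 = r ^ 2 + 1 := by exact_mod_cast hq
  have hmul : e * conj e = 1 := by
    rw [Complex.mul_conj, Complex.normSq_eq_norm_sq, he]; simp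
  have hadd : e + conj e = 2 * r ^ 2 := by
    rw [Complex.add_conj, hre]; push_cast; ring
  rw [mem_unitaryGroup_iff', star_eq_conjTranspose]
  ext i j
  fin_cases i <;> fin_cases j <;>
    simp [vMatTemplate, mul_apply, Fin.sum_univ_four, one_apply] <;>
    field_simp <;> grind

theorem VMat_eq_vMatTemplate (k : ℕ) (hk : Real.cos (Real.pi / (2 * k)) ≠ 0) :
    VMat k = vMatTemplate (√2) (√(Real.cos (Real.pi / k))) (√(Real.cos (Real.pi / k) + 1))
      (Complex.exp ((Real.pi / k : ℝ) * Complex.I)) := by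
  have hE : Complex.exp ((Real.pi / k : ℝ) * Complex.I) =
      Complex.exp (Complex.I * ((Real.pi : ℂ) / (k : ℂ))) := by
    push_cast; ring_nf
  have hconjE : conj (Complex.exp ((Real.pi / k : ℝ) * Complex.I)) =
      Complex.exp (-(Complex.I * ((Real.pi : ℂ) / (k : ℂ)))) := by
    rw [← Complex.exp_conj, map_mul, Complex.conj_ofReal, Complex.conj_I]; push_cast; ring_nf
  have hentry : Complex.exp (-(Complex.I * ((Real.pi : ℂ) / (2 * (k : ℂ))))) *
        (Real.sin (Real.pi / k) : ℂ) /
        (Complex.I * (Real.sqrt 2 : ℂ) * (Real.cos (Real.pi / (2 * k)) : ℂ)) =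
      (Complex.exp (-(Complex.I * ((Real.pi : ℂ) / (k : ℂ)))) - 1) / (Real.sqrt 2 : ℂ) := by
    have hhalf : Real.pi / (2 * k) = Real.pi / k / 2 := by ring
    rw [hhalf] at hk ⊢
    rw [← Complex.exp_neg_I_half_mul_sin_div_cos_half (Real.pi / k) (by exact_mod_cast hk)]
    push_cast
    ring_nf
  rw [VMat, vMatTemplate, hconjE, hE, hentry]

theorem VMat_unitary_general (k : ℕ) (hk : 3 ≤ k) :
    VMat k * (VMat k)ᴴ = 1 ∧ (VMat k)ᴴ * VMat k = 1 := by
  have hk' : (2 : ℝ) < k := by exact_mod_cast hk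
  have hcos : 0 ≤ Real.cos (Real.pi / k) := (Real.cos_pi_div_pos hk').le
  have hcos_half : Real.cos (Real.pi / (2 * k)) ≠ 0 := (Real.cos_pi_div_pos (by linarith)).ne'
  have hV : VMat k ∈ unitaryGroup (Fin 4) ℂ := by
    rw [VMat_eq_vMatTemplate k hcos_half]
    refine vMatTemplate_mem_unitaryGroup (Real.sq_sqrt zero_le_two) ?_
      (Complex.norm_exp_ofReal_mul_I _) ?_
    · rw [Real.sq_sqrt (by linarith), Real.sq_sqrt hcos]
    · rw [Complex.exp_ofReal_mul_I_re, Real.sq_sqrt hcos]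
  exact ⟨mem_unitaryGroup_iff.mp hV, mem_unitaryGroup_iff'.mp hV⟩

/-- For every odd integer `k ≥ 3`, the matrix `V_k` is unitary: `V·V† = V†·V = I`. -/
theorem VMat_unitary (k : ℕ) (hk : 3 ≤ k) (hko : Odd k) :
    VMat k * (VMat k)ᴴ = 1 ∧ (VMat k)ᴴ * VMat k = 1 :=
  VMat_unitary_general k hk
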